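/- arXiv:1510.03098 — 5 statements merged into one kernel-verified Lean document; each statement's English description precedes it below -/
import Mathlib

section
/- Let 0 < q < 1. Then (1/π)·∫₀^{2π} (q − 2√q·cos θ)²·sin²θ / (1 + q − 2√q·cos θ) dθ = q. -/
/-!
Put `D θ = 1 + r ^ 2 - 2 r cos θ = |1 - r e^{iθ}| ^ 2` with `r = √q`. Since `r ^ 2 - 2 r cos θ = D θ - 1`,
the integrand is `(D θ - 2) sin² θ + sin² θ / D θ`. Over a period the first term integrates to
`(r ^ 2 - 1) π`. Dividing `sin² θ = 1 - cos² θ` by `D θ` as a polynomial in `cos θ` reduces the second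
to the Poisson kernel `(1 - r ^ 2) / D θ`, whose integral `2π` is computed from the explicit primitive
`θ + 2 arctan (r sin θ / (1 - r cos θ))`, a continuous branch of `2 arg (e^{iθ} - r) - θ`.
-/

open Real intervalIntegral

section PoissonKernel

variable {r : ℝ}

lemma one_sub_mul_cos_pos (hr : |r| < 1) (θ : ℝ) : 0 < 1 - r * cos θ := by
  have : |r * cos θ| < 1 := by
    rw [abs_mul]
    nlinarith [abs_cos_le_one θ, abs_nonneg r, abs_nonneg (cos θ)]
  linarith [le_abs_self (r * cos θ)]

lemma one_add_sq_sub_two_mul_cos_pos (hr : |r| < 1) (θ : ℝ) :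
    0 < 1 + r ^ 2 - 2 * r * cos θ := by
  nlinarith [one_sub_mul_cos_pos hr θ, sq_nonneg (r * sin θ), sin_sq_add_cos_sq θ]

lemma Continuous.div_one_add_sq_sub_two_mul_cos {f : ℝ → ℝ} (hf : Continuous f)
    (hr : |r| < 1) : Continuous fun θ => f θ / (1 + r ^ 2 - 2 * r * cos θ) :=
  hf.div (by fun_prop) fun θ => (one_add_sq_sub_two_mul_cos_pos hr θ).ne'

lemma hasDerivAt_poissonKernel_primitive (hr : |r| < 1) (θ : ℝ) :
    HasDerivAt (fun x => x + 2 * arctan (r * sin x / (1 - r * cos x)))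
      ((1 - r ^ 2) / (1 + r ^ 2 - 2 * r * cos θ)) θ := by
  have hc := (one_sub_mul_cos_pos hr θ).ne'
  have hD := (one_add_sq_sub_two_mul_cos_pos hr θ).ne'
  have hquot : HasDerivAt (fun x => r * sin x / (1 - r * cos x))
      ((r * cos θ - r ^ 2) / (1 - r * cos θ) ^ 2) θ := by
    refine (((hasDerivAt_sin θ).const_mul r).fun_div
      (((hasDerivAt_cos θ).const_mul r).const_sub 1) hc).congr_deriv ?_
    linear_combination (-r ^ 2 / (1 - r * cos θ) ^ 2) * sin_sq_add_cos_sq θ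
  refine ((hasDerivAt_id' θ).fun_add (hquot.arctan.const_mul 2)).congr_deriv ?_
  field_simp
  linear_combination (2 * r ^ 4 - 2 * r ^ 3 * cos θ) * sin_sq_add_cos_sq θ

theorem integral_poissonKernel (hr : |r| < 1) :
    ∫ θ in 0..2 * π, (1 - r ^ 2) / (1 + r ^ 2 - 2 * r * cos θ) = 2 * π := by
  rw [integral_eq_sub_of_hasDerivAt (fun θ _ => hasDerivAt_poissonKernel_primitive hr θ)
    ((continuous_const.div_one_add_sq_sub_two_mul_cos hr).intervalIntegrable _ _)]
  simp

theorem integral_sin_sq_div_one_add_sq_sub_two_mul_cos (hr : |r| < 1) :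
    ∫ θ in 0..2 * π, sin θ ^ 2 / (1 + r ^ 2 - 2 * r * cos θ) = π := by
  rcases eq_or_ne r 0 with rfl | hr0
  · simp [integral_sin_sq]
  have hsplit : ∀ θ, sin θ ^ 2 / (1 + r ^ 2 - 2 * r * cos θ) =
      (2 * r * cos θ + (1 + r ^ 2)
        - (1 - r ^ 2) * ((1 - r ^ 2) / (1 + r ^ 2 - 2 * r * cos θ))) / (4 * r ^ 2) := by
    intro θ
    set D := 1 + r ^ 2 - 2 * r * cos θ with hD_def
    have hD : D ≠ 0 := (one_add_sq_sub_two_mul_cos_pos hr θ).ne'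
    field_simp
    linear_combination (4 * r ^ 2) * sin_sq_add_cos_sq θ - (2 * r * cos θ + 1 + r ^ 2) * hD_def
  simp_rw [hsplit]
  rw [integral_div, integral_sub, integral_add, integral_const_mul, integral_const_mul,
    integral_poissonKernel hr]
  · simp only [integral_cos, sin_two_pi, sin_zero, sub_self, mul_zero, integral_const,
      sub_zero, smul_eq_mul, zero_add]
    field_simp
    ring
  all_goals refine Continuous.intervalIntegrable ?_ _ _
  · fun_prop
  · fun_prop
  · fun_prop
  · exact continuous_const.mul (continuous_const.div_one_add_sq_sub_two_mul_cos hr)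

end PoissonKernel

lemma integral_sin_pow_mul_cos_zero_two_pi (m : ℕ) : ∫ θ in 0..2 * π, sin θ ^ m * cos θ = 0 := by
  simpa using integral_sin_pow_mul_cos_pow_odd (a := 0) (b := 2 * π) m 0

theorem integral_sq_sub_two_mul_cos_sq_mul_sin_sq_div {r : ℝ} (hr : |r| < 1) :
    ∫ θ in 0..2 * π, (r ^ 2 - 2 * r * cos θ) ^ 2 * sin θ ^ 2 / (1 + r ^ 2 - 2 * r * cos θ)
      = r ^ 2 * π := by
  have hsplit : ∀ θ, (r ^ 2 - 2 * r * cos θ) ^ 2 * sin θ ^ 2 / (1 + r ^ 2 - 2 * r * cos θ) =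
      (r ^ 2 - 1) * sin θ ^ 2 - 2 * r * (sin θ ^ 2 * cos θ)
        + sin θ ^ 2 / (1 + r ^ 2 - 2 * r * cos θ) := by
    intro θ
    set D := 1 + r ^ 2 - 2 * r * cos θ with hD_def
    have hD : D ≠ 0 := (one_add_sq_sub_two_mul_cos_pos hr θ).ne'
    field_simp
    linear_combination (sin θ ^ 2 * (D - 1 + r ^ 2 - 2 * r * cos θ)) * hD_def
  simp_rw [hsplit]
  rw [integral_add, integral_sub, integral_const_mul, integral_const_mul, integral_sin_sq,
    integral_sin_pow_mul_cos_zero_two_pi, integral_sin_sq_div_one_add_sq_sub_two_mul_cos hr]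
  · simp only [sin_zero, cos_zero, sin_two_pi, cos_two_pi, mul_zero, mul_one, sub_self, zero_add,
      sub_zero]
    ring
  all_goals refine Continuous.intervalIntegrable ?_ _ _
  · fun_prop
  · fun_prop
  · fun_prop
  · exact continuous_sin.pow 2 |>.div_one_add_sq_sub_two_mul_cos hr

/-- For `0 < q < 1`,
`(1/π)·∫₀^{2π} (q − 2√q·cos θ)²·sin²θ/(1 + q − 2√q·cos θ) dθ = q`. -/
theorem stmt_10 (q : ℝ) (hq0 : 0 < q) (hq1 : q < 1) :
    (1 / Real.pi) * ∫ θ in (0 : ℝ)..(2 * Real.pi),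
        (q - 2 * Real.sqrt q * Real.cos θ) ^ 2 * Real.sin θ ^ 2
          / (1 + q - 2 * Real.sqrt q * Real.cos θ)
      = q := by
  have hr : |√q| < 1 := by
    rw [abs_of_nonneg (sqrt_nonneg q), sqrt_lt' one_pos]
    linarith
  have hsq : √q ^ 2 = q := sq_sqrt hq0.le
  have h := integral_sq_sub_two_mul_cos_sq_mul_sin_sq_div hr
  rw [hsq] at h
  rw [h]
  field_simp
end

section
/- Let q ∈ ℂ and let 0 < r < 1. Then the counterclockwise circle integral over the circle of radius r centered at −1 of the function m ↦ (m² − (q−2)m + 1)² / (m²·(1+m)⁴) equals 4πi·q. Equivalently, the residue of this function at its pole m = −1 of order 4 equals 2q. -/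
open Metric Complex Set

private lemma circleInt_const_mul_helper {f : ℂ → ℂ} {c : ℂ} {R : ℝ} (a : ℂ)
    (h : CircleIntegrable f c R) : CircleIntegrable (fun z => a * f z) c R :=
  h.const_mul a

private lemma circleIntegral_add_helper {f g : ℂ → ℂ} {c : ℂ} {R : ℝ}
    (hf : CircleIntegrable f c R) (hg : CircleIntegrable g c R) :
    (∮ z in C(c, R), (f z + g z)) = (∮ z in C(c, R), f z) + ∮ z in C(c, R), g z := by
  simp only [circleIntegral, smul_add, intervalIntegral.integral_add hf.out hg.out]

private lemma partial_fractions (q m : ℂ) (h0 : m ≠ 0) (h1 : (1:ℂ) + m ≠ 0) :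
    (m^2-(q-2)*m+1)^2/(m^2*(1+m)^4)
      = 2*q/(1+m) + 2*q/(1+m)^2 + q^2/(1+m)^4 - 2*q/m + 1/m^2 := by
  have hden : m^2*(1+m)^4 ≠ 0 := mul_ne_zero (pow_ne_zero _ h0) (pow_ne_zero _ h1)
  apply mul_right_cancel₀ hden
  rw [div_mul_cancel₀ _ hden]
  have t1 : 2*q/(1+m) * (m^2*(1+m)^4) = 2*q*(m^2*(1+m)^3) := by
    rw [div_mul_eq_mul_div, div_eq_iff h1]; ring
  have t2 : 2*q/(1+m)^2 * (m^2*(1+m)^4) = 2*q*(m^2*(1+m)^2) := by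
    rw [div_mul_eq_mul_div, div_eq_iff (pow_ne_zero 2 h1)]; ring
  have t3 : q^2/(1+m)^4 * (m^2*(1+m)^4) = q^2*m^2 := by
    rw [div_mul_eq_mul_div, div_eq_iff (pow_ne_zero 4 h1)]; ring
  have t4 : 2*q/m * (m^2*(1+m)^4) = 2*q*(m*(1+m)^4) := by
    rw [div_mul_eq_mul_div, div_eq_iff h0]; ring
  have t5 : 1/m^2 * (m^2*(1+m)^4) = (1+m)^4 := by
    rw [div_mul_eq_mul_div, div_eq_iff (pow_ne_zero 2 h0)]; ring
  simp only [add_mul, sub_mul]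
  rw [t1, t2, t3, t4, t5]
  ring

/-- For any `q ∈ ℂ` and `0 < r < 1`, the counterclockwise circle integral
around `−1` of `m ↦ (m² − (q−2)m + 1)²/(m²(1+m)⁴)` equals `4πi·q` (i.e. the residue at
the order-4 pole `m = −1` equals `2q`). -/
theorem stmt_13 (q : ℂ) (r : ℝ) (hr0 : 0 < r) (hr1 : r < 1) :
    (∮ m in C(-1, r), (m ^ 2 - (q - 2) * m + 1) ^ 2 / (m ^ 2 * (1 + m) ^ 4))
      = 4 * Real.pi * Complex.I * q := by
  have habs : |r| = r := abs_of_pos hr0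
  have h0sphere : (0 : ℂ) ∉ sphere (-1 : ℂ) |r| := by
    simp only [mem_sphere_iff_norm, habs]
    intro h
    rw [zero_sub, norm_neg] at h
    norm_num at h
    exact absurd h.symm (ne_of_lt hr1)
  have hm1sphere : (-1 : ℂ) ∉ sphere (-1 : ℂ) |r| := by
    simp only [mem_sphere_iff_norm, habs]
    intro h
    simp only [sub_self, norm_zero] at h
    exact absurd h.symm (ne_of_gt hr0)
  -- the five pieces
  set f1 : ℂ → ℂ := fun m => 2 * q * (m - (-1))⁻¹ with hf1
  set f2 : ℂ → ℂ := fun m => 2 * q * (m - (-1)) ^ (-2 : ℤ) with hf2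
  set f3 : ℂ → ℂ := fun m => q ^ 2 * (m - (-1)) ^ (-4 : ℤ) with hf3
  set f4 : ℂ → ℂ := fun m => (-2) * q * (m - 0)⁻¹ with hf4
  set f5 : ℂ → ℂ := fun m => (m - 0) ^ (-2 : ℤ) with hf5
  have hi1 : CircleIntegrable f1 (-1) r :=
    circleInt_const_mul_helper _ (circleIntegrable_sub_inv_iff.mpr (Or.inr hm1sphere))
  have hi2 : CircleIntegrable f2 (-1) r :=
    circleInt_const_mul_helper _ (circleIntegrable_sub_zpow_iff.mpr (Or.inr (Or.inr hm1sphere)))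
  have hi3 : CircleIntegrable f3 (-1) r :=
    circleInt_const_mul_helper _ (circleIntegrable_sub_zpow_iff.mpr (Or.inr (Or.inr hm1sphere)))
  have hi4 : CircleIntegrable f4 (-1) r :=
    circleInt_const_mul_helper _ (circleIntegrable_sub_inv_iff.mpr (Or.inr h0sphere))
  have hi5 : CircleIntegrable f5 (-1) r :=
    circleIntegrable_sub_zpow_iff.mpr (Or.inr (Or.inr h0sphere))
  -- pointwise identity on the sphere
  have heq : Set.EqOn (fun m : ℂ => (m ^ 2 - (q - 2) * m + 1) ^ 2 / (m ^ 2 * (1 + m) ^ 4))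
      (fun m => f1 m + f2 m + f3 m + f4 m + f5 m) (sphere (-1 : ℂ) r) := by
    intro m hm
    have hm0 : m ≠ 0 := by
      rintro rfl
      rw [← habs] at hm; exact h0sphere hm
    have hm1 : (1:ℂ) + m ≠ 0 := by
      intro h
      have : m = -1 := by linear_combination h
      rw [this, ← habs] at hm; exact hm1sphere hm
    show (m ^ 2 - (q - 2) * m + 1) ^ 2 / (m ^ 2 * (1 + m) ^ 4)
        = f1 m + f2 m + f3 m + f4 m + f5 m
    rw [partial_fractions q m hm0 hm1, hf1, hf2, hf3, hf4, hf5]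
    simp only [sub_neg_eq_add, sub_zero, zpow_neg, zpow_ofNat]
    ring
  rw [circleIntegral.integral_congr hr0.le heq]
  rw [circleIntegral_add_helper (f := fun z => f1 z + f2 z + f3 z + f4 z) (g := f5)
      (((hi1.add hi2).add hi3).add hi4) hi5,
    circleIntegral_add_helper (f := fun z => f1 z + f2 z + f3 z) (g := f4)
      ((hi1.add hi2).add hi3) hi4,
    circleIntegral_add_helper (f := fun z => f1 z + f2 z) (g := f3) (hi1.add hi2) hi3,
    circleIntegral_add_helper (f := f1) (g := f2) hi1 hi2]
  have e1 : circleIntegral f1 (-1) r = 2 * q * (2 * Real.pi * Complex.I) := by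
    rw [hf1, circleIntegral.integral_const_mul,
      circleIntegral.integral_sub_inv_of_mem_ball (by simpa using hr0)]
  have e2 : circleIntegral f2 (-1) r = 0 := by
    rw [hf2, circleIntegral.integral_const_mul,
      circleIntegral.integral_sub_zpow_of_ne (by decide) _ _ _, mul_zero]
  have e3 : circleIntegral f3 (-1) r = 0 := by
    rw [hf3, circleIntegral.integral_const_mul,
      circleIntegral.integral_sub_zpow_of_ne (by decide) _ _ _, mul_zero]
  have e4 : circleIntegral f4 (-1) r = 0 := by
    rw [hf4, circleIntegral.integral_const_mul]
    have h2 : (∮ m in C(-1, r), (m - 0)⁻¹) = (0 : ℂ) := by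
      apply Complex.circleIntegral_eq_zero_of_differentiable_on_off_countable hr0.le
        Set.countable_empty
      · intro z hz
        have hz0 : z ≠ 0 := by
          intro h
          rw [h, mem_closedBall, Complex.dist_eq] at hz
          have h1 : (1:ℝ) ≤ r := by simpa using hz
          linarith
        exact ContinuousAt.continuousWithinAt
          ((continuousAt_id.sub continuousAt_const).inv₀ (by simpa using hz0))
      · intro z hz
        have hz0 : z ≠ 0 := by
          intro h
          rw [mem_diff, h, mem_ball, Complex.dist_eq] at hz
          have h1 : (1:ℝ) < r := by simpa using hz.1
          linarith
        exact (differentiableAt_id.sub_const (0:ℂ)).inv (by simpa using hz0)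
    rw [h2, mul_zero]
  have e5 : circleIntegral f5 (-1) r = 0 :=
    circleIntegral.integral_sub_zpow_of_ne (by decide) _ _ _
  rw [e1, e2, e3, e4, e5]
  ring
end

section
/- Let q ∈ ℂ, let 0 < r < 1, and let w ∈ ℂ satisfy |1 + w| > r. Then the counterclockwise circle integral over the circle of radius r centered at −1 of the function m ↦ (−1/m + q/(1+m))² / (m − w)² equals 4πi·(q/(1+w)² + q²/(1+w)³). -/
/-!
On the circle, `z(m)² / (m - w)² = h(m) / (m + 1)²` with `h(m) = (q - 1 - 1/m)² / (m - w)²`,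
which is holomorphic on the closed disk because `0` and `w` lie outside it. Cauchy's integral
formula for the first derivative then gives `2πi · h'(-1)`, and `h'(-1)` is computed directly.
-/

open Complex Metric Real

theorem neg_one_div_add_div_one_add {q m : ℂ} (h0 : m ≠ 0) (h1 : 1 + m ≠ 0) :
    -1 / m + q / (1 + m) = (q - 1 - 1 / m) / (1 + m) := by
  field_simp
  ring

theorem differentiableOn_sub_one_sub_inv_sq_div_sub_sq (q : ℂ) {w : ℂ} {s : Set ℂ}
    (h0 : 0 ∉ s) (hw : w ∉ s) :
    DifferentiableOn ℂ (fun m : ℂ => (q - 1 - 1 / m) ^ 2 / (m - w) ^ 2) s := by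
  intro m hm
  have hm0 : m ≠ 0 := ne_of_mem_of_not_mem hm h0
  have hmw : (m - w) ^ 2 ≠ 0 := pow_ne_zero 2 (sub_ne_zero.mpr (ne_of_mem_of_not_mem hm hw))
  apply DifferentiableAt.differentiableWithinAt
  fun_prop (disch := assumption)

theorem hasDerivAt_sub_one_sub_inv_sq_div_sub_sq {q w : ℂ} (hw : 1 + w ≠ 0) :
    HasDerivAt (fun m : ℂ => (q - 1 - 1 / m) ^ 2 / (m - w) ^ 2)
      (2 * q / (1 + w) ^ 2 + 2 * q ^ 2 / (1 + w) ^ 3) (-1) := by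
  have hneg : (-1 - w : ℂ) = -(1 + w) := by ring
  have hnum : HasDerivAt (fun m : ℂ => q - 1 - 1 / m) 1 (-1) := by
    simpa [one_div] using (hasDerivAt_inv (by norm_num : (-1 : ℂ) ≠ 0)).const_sub (q - 1)
  have hden : HasDerivAt (fun m : ℂ => m - w) 1 (-1) := (hasDerivAt_id _).sub_const w
  have hden_ne : (-1 - w) ^ 2 ≠ 0 := by rw [hneg]; exact pow_ne_zero 2 (neg_ne_zero.mpr hw)
  refine ((hnum.fun_pow 2).fun_div (hden.fun_pow 2) hden_ne).congr_deriv ?_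
  rw [hneg]
  field_simp
  ring

/-- For `q ∈ ℂ`, `0 < r < 1`, and `w ∈ ℂ` with `|1 + w| > r`, the
counterclockwise circle integral around `−1` of `m ↦ (−1/m + q/(1+m))²/(m − w)²`
equals `4πi·(q/(1+w)² + q²/(1+w)³)`. -/
theorem stmt_15 (q : ℂ) (r : ℝ) (hr0 : 0 < r) (hr1 : r < 1)
    (w : ℂ) (hw : r < ‖1 + w‖) :
    (∮ m in C(-1, r), (-1 / m + q / (1 + m)) ^ 2 / (m - w) ^ 2)
      = 4 * Real.pi * Complex.I * (q / (1 + w) ^ 2 + q ^ 2 / (1 + w) ^ 3) := by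
  have hw1 : 1 + w ≠ 0 := norm_pos_iff.mp (hr0.trans hw)
  have h0 : (0 : ℂ) ∉ closedBall (-1) r := by simpa using hr1
  have hw_out : w ∉ closedBall (-1) r := by
    simpa [Complex.dist_eq, add_comm w] using hw
  have hdiff := differentiableOn_sub_one_sub_inv_sq_div_sub_sq q h0 hw_out
  calc (∮ m in C(-1, r), (-1 / m + q / (1 + m)) ^ 2 / (m - w) ^ 2)
      = ∮ m in C(-1, r), (1 / (m - -1) ^ 2) • ((q - 1 - 1 / m) ^ 2 / (m - w) ^ 2) := by
        refine circleIntegral.integral_congr hr0.le fun m hm => ?_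
        have hm0 : m ≠ 0 := ne_of_mem_of_not_mem (sphere_subset_closedBall hm) h0
        have hm1 : 1 + m ≠ 0 := by
          rw [mem_sphere, Complex.dist_eq, sub_neg_eq_add] at hm
          rw [add_comm, ← norm_pos_iff, hm]
          exact hr0
        rw [neg_one_div_add_div_one_add hm0 hm1, sub_neg_eq_add, smul_eq_mul, add_comm m 1,
          div_pow]
        ring
    _ = (2 * π * I) • (2 * q / (1 + w) ^ 2 + 2 * q ^ 2 / (1 + w) ^ 3) := by
        rw [hdiff.deriv_eq_smul_circleIntegral hr0,
          (hasDerivAt_sub_one_sub_inv_sq_div_sub_sq hw1).deriv]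
    _ = 4 * π * I * (q / (1 + w) ^ 2 + q ^ 2 / (1 + w) ^ 3) := by
        rw [smul_eq_mul]
        ring
end

section
/- Let q ∈ ℂ and let 0 < r < 1. Then the counterclockwise circle integral over the circle of radius r centered at −1 of the function m ↦ 2·(−1/m + q/(1+m))·(1/m² − q/(1+m)²)·(1/(1+m)) equals 4πi·(1 + q). Equivalently, the residue of this function at m = −1 equals 2(1+q). -/
open Complex Metric

private lemma aux_circleIntegral_add {f g : ℂ → ℂ} {c : ℂ} {R : ℝ}
    (hf : CircleIntegrable f c R) (hg : CircleIntegrable g c R) :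
    (∮ z in C(c, R), f z + g z) = (∮ z in C(c, R), f z) + ∮ z in C(c, R), g z := by
  simp only [circleIntegral, smul_add, intervalIntegral.integral_add hf.out hg.out]

private lemma aux_h_diff (q : ℂ) {m : ℂ} (hm : m ≠ 0) :
    DifferentiableAt ℂ (fun m : ℂ => (-2 - 2*q)/m + (2 + 2*q)/m^2 - 2/m^3) m := by
  apply DifferentiableAt.sub
  apply DifferentiableAt.add
  · exact (differentiableAt_const _).div differentiableAt_id hm
  · exact (differentiableAt_const _).div (differentiableAt_id.pow 2) (pow_ne_zero 2 hm)
  · exact (differentiableAt_const _).div (differentiableAt_id.pow 3) (pow_ne_zero 3 hm)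

/-- For any `q ∈ ℂ` and `0 < r < 1`, the counterclockwise circle integral
around `−1` of `m ↦ 2·(−1/m + q/(1+m))·(1/m² − q/(1+m)²)·(1/(1+m))` equals `4πi·(1+q)`
(i.e. the residue at `m = −1` equals `2(1+q)`). -/
theorem stmt_17 (q : ℂ) (r : ℝ) (hr0 : 0 < r) (hr1 : r < 1) :
    (∮ m in C(-1, r),
        2 * (-1 / m + q / (1 + m)) * (1 / m ^ 2 - q / (1 + m) ^ 2) * (1 / (1 + m)))
      = 4 * Real.pi * Complex.I * (1 + q) := by
  set f1 : ℂ → ℂ := fun m => (2 + 2*q) * (m - (-1))⁻¹ with hf1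
  set f2 : ℂ → ℂ := fun m => (-2*q) * (m - (-1)) ^ (-3 : ℤ) with hf2
  set f3 : ℂ → ℂ := fun m => (-2*q^2) * (m - (-1)) ^ (-4 : ℤ) with hf3
  set h : ℂ → ℂ := fun m => (-2 - 2*q)/m + (2 + 2*q)/m^2 - 2/m^3 with hh
  -- points on the sphere
  have hne1 : ∀ m ∈ sphere (-1 : ℂ) r, m - (-1) ≠ 0 := by
    intro m hm h0
    rw [mem_sphere_iff_norm, h0, norm_zero] at hm
    linarith
  have hne0 : ∀ m ∈ sphere (-1 : ℂ) r, m ≠ 0 := by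
    rintro m hm rfl
    rw [mem_sphere_iff_norm] at hm
    simp at hm
    linarith
  -- the integrand equals the partial-fraction decomposition on the sphere
  have hcong : (∮ m in C(-1, r),
      2 * (-1 / m + q / (1 + m)) * (1 / m ^ 2 - q / (1 + m) ^ 2) * (1 / (1 + m)))
      = ∮ m in C(-1, r), (f1 m + f2 m + f3 m + h m) := by
    apply circleIntegral.integral_congr hr0.le
    intro m hm
    have hm0 := hne0 m hm
    have hm1' : (1 : ℂ) + m ≠ 0 := by
      have := hne1 m hm; rwa [show m - (-1) = 1 + m by ring] at this
    have hw : m - (-1) = 1 + m := by ring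
    simp only [hf1, hf2, hf3, hh, hw]
    rw [zpow_neg, zpow_neg, show ((1+m)^(3:ℤ)) = (1+m)^(3:ℕ) by norm_cast,
      show ((1+m)^(4:ℤ)) = (1+m)^(4:ℕ) by norm_cast,
      inv_eq_one_div ((1+m)^(3:ℕ)), inv_eq_one_div ((1+m)^(4:ℕ)),
      inv_eq_one_div (1+m)]
    rw [mul_one_div, mul_one_div, mul_one_div]
    field_simp [hm0, hm1']
    ring
  rw [hcong]
  -- integrability of the pieces
  have hi1 : CircleIntegrable f1 (-1) r := by
    apply ContinuousOn.circleIntegrable hr0.le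
    exact fun m hm => (continuousAt_const.mul
      ((continuousAt_id.sub continuousAt_const).inv₀ (hne1 m hm))).continuousWithinAt
  have hi2 : CircleIntegrable f2 (-1) r := by
    apply ContinuousOn.circleIntegrable hr0.le
    exact fun m hm => (continuousAt_const.mul
      ((continuousAt_id.sub continuousAt_const).zpow₀ _ (Or.inl (hne1 m hm)))).continuousWithinAt
  have hi3 : CircleIntegrable f3 (-1) r := by
    apply ContinuousOn.circleIntegrable hr0.le
    exact fun m hm => (continuousAt_const.mul
      ((continuousAt_id.sub continuousAt_const).zpow₀ _ (Or.inl (hne1 m hm)))).continuousWithinAt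
  have hih : CircleIntegrable h (-1) r := by
    apply ContinuousOn.circleIntegrable hr0.le
    exact fun m hm => ((aux_h_diff q (hne0 m hm)).continuousAt).continuousWithinAt
  have hi12 : CircleIntegrable (fun m => f1 m + f2 m) (-1) r := hi1.add hi2
  have hi123 : CircleIntegrable (fun m => f1 m + f2 m + f3 m) (-1) r := hi12.add hi3
  -- split the integral
  rw [aux_circleIntegral_add hi123 hih, aux_circleIntegral_add hi12 hi3,
      aux_circleIntegral_add hi1 hi2]
  -- compute each piece
  have e1 : (∮ m in C(-1, r), f1 m) = (2 + 2*q) * (2 * Real.pi * Complex.I) := by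
    simp only [hf1]
    rw [circleIntegral.integral_const_mul,
      circleIntegral.integral_sub_inv_of_mem_ball (mem_ball_self hr0)]
  have e2 : (∮ m in C(-1, r), f2 m) = 0 := by
    simp only [hf2]
    rw [circleIntegral.integral_const_mul,
      circleIntegral.integral_sub_zpow_of_ne (by decide) (-1) (-1) r, mul_zero]
  have e3 : (∮ m in C(-1, r), f3 m) = 0 := by
    simp only [hf3]
    rw [circleIntegral.integral_const_mul,
      circleIntegral.integral_sub_zpow_of_ne (by decide) (-1) (-1) r, mul_zero]
  have eh : (∮ m in C(-1, r), h m) = 0 := by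
    have hne : ∀ m ∈ closedBall (-1 : ℂ) r, m ≠ 0 := by
      rintro m hm rfl
      rw [mem_closedBall] at hm
      have : dist (0 : ℂ) (-1) = 1 := by simp [dist_eq_norm]
      rw [this] at hm
      linarith
    apply circleIntegral_eq_zero_of_differentiable_on_off_countable hr0.le
      Set.countable_empty
    · intro m hm
      exact ((aux_h_diff q (hne m hm)).continuousAt).continuousWithinAt
    · intro m hm
      exact aux_h_diff q (hne m (ball_subset_closedBall hm.1))
  rw [e1, e2, e3, eh]
  ring
end

section
/- Let q ∈ ℂ and let 0 < r < 1. Then the counterclockwise circle integral over the circle of radius r centered at −1 of the function m ↦ (−1/m + q/(1+m))²·(1/(1+m)² + q/(1+m)³) equals 2πi·(2q² + 5q + 2). Equivalently, the residue of this function at m = −1 equals 2q² + 5q + 2. -/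
/-!
Partial fractions split the integrand into `(1 + q) / m ^ 2 - (2q² + 5q + 2) / m`, which is
holomorphic on the closed disk `closedBall (-1) r` because `r < 1` keeps `0` outside it, plus a
polynomial in `(m + 1)⁻¹`. By Cauchy's theorem the first part integrates to zero; of the powers
`(m + 1) ^ (-k)` only `k = 1` contributes, so the integral is `2πi` times the coefficient
`2q² + 5q + 2` of `(m + 1)⁻¹`.
-/

open Complex Metric Polynomial Real

theorem circleIntegral_sub_center_zpow {c : ℂ} {R : ℝ} (hR : 0 < R) (n : ℤ) :
    (∮ z in C(c, R), (z - c) ^ n) = if n = -1 then 2 * π * I else 0 := by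
  split_ifs with hn
  · simpa [hn] using circleIntegral.integral_sub_inv_of_mem_ball (mem_ball_self hR)
  · exact circleIntegral.integral_sub_zpow_of_ne hn c c R

theorem circleIntegral_eval_sub_center_inv {c : ℂ} {R : ℝ} (hR : 0 < R) (P : ℂ[X]) :
    (∮ z in C(c, R), P.eval (z - c)⁻¹) = 2 * π * I * P.coeff 1 := by
  have hterm (k : ℕ) : (fun z => P.coeff k * (z - c)⁻¹ ^ k) =
      fun z => P.coeff k * (z - c) ^ (-(k : ℤ)) := by
    ext z
    rw [zpow_neg, zpow_natCast, inv_pow]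
  have hint (k : ℕ) : CircleIntegrable (fun z => P.coeff k * (z - c)⁻¹ ^ k) c R := by
    have hc : c ∉ sphere c |R| := by simp [abs_of_pos hR, hR.ne]
    rw [hterm]
    exact (circleIntegrable_sub_zpow_iff.2 (.inr (.inr hc))).const_smul (a := P.coeff k)
  simp_rw [eval_eq_sum_range' (Nat.lt_add_of_pos_right two_pos)]
  rw [circleIntegral.integral_fun_sum fun k _ => hint k]
  simp only [hterm, circleIntegral.integral_const_mul, circleIntegral_sub_center_zpow hR]
  rw [Finset.sum_eq_single_of_mem 1 (by simp; omega)]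
  · simp [mul_comm]
  · intro k _ hk
    simp [hk]

theorem circleIntegrable_eval_sub_center_inv {c : ℂ} {R : ℝ} (hR : 0 < R) (P : ℂ[X]) :
    CircleIntegrable (fun z => P.eval (z - c)⁻¹) c R :=
  (P.continuous.comp_continuousOn <| (continuousOn_id.sub continuousOn_const).inv₀
    fun _ hz => sub_ne_zero.2 (ne_of_mem_sphere hz hR.ne')).circleIntegrable hR.le

lemma differentiableOn_div_sq_sub_div (a b : ℂ) :
    DifferentiableOn ℂ (fun m : ℂ => a / m ^ 2 - b / m) {0}ᶜ := fun m hm =>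
  have hm : m ≠ 0 := hm
  DifferentiableAt.differentiableWithinAt (by fun_prop (disch := simp [hm]))

lemma closedBall_neg_one_subset_compl_zero {r : ℝ} (hr : r < 1) :
    closedBall (-1 : ℂ) r ⊆ {0}ᶜ := by
  rintro m hm rfl
  simp only [mem_closedBall, Complex.dist_eq, zero_sub, neg_neg, norm_one] at hm
  linarith

/-- The principal part of the integrand at `m = -1`, as a polynomial in `(m + 1)⁻¹`. -/
noncomputable def mpPrincipalPart (q : ℂ) : ℂ[X] :=
  C (2 * q ^ 2 + 5 * q + 2) * X + C (2 * q ^ 2 + 4 * q + 1) * X ^ 2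
    + C (2 * q ^ 2 + 3 * q) * X ^ 3 + C (3 * q ^ 2) * X ^ 4 + C (q ^ 3) * X ^ 5

lemma mpPrincipalPart_coeff_one (q : ℂ) :
    (mpPrincipalPart q).coeff 1 = 2 * q ^ 2 + 5 * q + 2 := by
  simp only [mpPrincipalPart, coeff_add, coeff_C_mul, coeff_X_pow, coeff_X_one]
  norm_num

lemma integrand_eq_add_eval_mpPrincipalPart (q : ℂ) {m : ℂ} (h0 : m ≠ 0) (h1 : 1 + m ≠ 0) :
    (-1 / m + q / (1 + m)) ^ 2 * (1 / (1 + m) ^ 2 + q / (1 + m) ^ 3)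
      = ((1 + q) / m ^ 2 - (2 * q ^ 2 + 5 * q + 2) / m)
        + (mpPrincipalPart q).eval (m - -1)⁻¹ := by
  rw [sub_neg_eq_add, add_comm m]
  simp only [mpPrincipalPart, eval_add, eval_mul, eval_C, eval_pow, eval_X]
  field_simp
  ring

/-- For any `q ∈ ℂ` and `0 < r < 1`, the counterclockwise circle integral
around `−1` of `m ↦ (−1/m + q/(1+m))²·(1/(1+m)² + q/(1+m)³)` equals `2πi·(2q² + 5q + 2)`
(i.e. the residue at `m = −1` equals `2q² + 5q + 2`). -/
theorem stmt_18 (q : ℂ) (r : ℝ) (hr0 : 0 < r) (hr1 : r < 1) :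
    (∮ m in C(-1, r),
        (-1 / m + q / (1 + m)) ^ 2 * (1 / (1 + m) ^ 2 + q / (1 + m) ^ 3))
      = 2 * Real.pi * Complex.I * (2 * q ^ 2 + 5 * q + 2) := by
  have hregular := differentiableOn_div_sq_sub_div (1 + q) (2 * q ^ 2 + 5 * q + 2)
    |>.mono (closedBall_neg_one_subset_compl_zero hr1)
  have hsplit (m : ℂ) (hm : m ∈ sphere (-1) r) := by
    have h0 : m ≠ 0 := closedBall_neg_one_subset_compl_zero hr1 (sphere_subset_closedBall hm)
    have h1 : 1 + m ≠ 0 := by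
      rw [add_comm, ← sub_neg_eq_add]
      exact sub_ne_zero.2 (ne_of_mem_sphere hm hr0.ne')
    exact integrand_eq_add_eval_mpPrincipalPart q h0 h1
  rw [circleIntegral.integral_congr hr0.le hsplit, circleIntegral.integral_add
      (hregular.continuousOn.mono sphere_subset_closedBall |>.circleIntegrable hr0.le)
      (circleIntegrable_eval_sub_center_inv hr0 _),
    (hregular.diffContOnCl_ball subset_rfl).circleIntegral_eq_zero hr0.le,
    circleIntegral_eval_sub_center_inv hr0, mpPrincipalPart_coeff_one, zero_add]
end
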